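/- Let (X,d) be an additive metric space, (Y,ρ) a metric space, and f : X → Y a bijective η-quasisymmetric mapping with η(t) = t. Then (Y,ρ) is an additive metric space. -/

import Mathlib

open NNReal

/-!
Quasisymmetry with `η = id` forces equality, not just inequality, between the distance ratios seen
from a common centre, since the condition can be applied with `t` and `1 / t` alike. Chaining two
centres shows that `f` multiplies all distances by one constant, and the additivity inequality is
invariant under rescaling the metric.
-/

def IsAdditiveMetric (X : Type*) [PseudoMetricSpace X] : Prop :=
  ∀ x y z t : X, dist x z + dist t y ≤ max (dist x y + dist t z) (dist x t + dist y z)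

def IsQuasisymmetric {X Y : Type*} [PseudoMetricSpace X] [PseudoMetricSpace Y]
    (η : ℝ≥0 → ℝ≥0) (f : X → Y) : Prop :=
  ∀ (a b x : X) (t : ℝ≥0), 0 < t →
    nndist x a ≤ t * nndist x b → nndist (f x) (f a) ≤ η t * nndist (f x) (f b)

theorem IsAdditiveMetric.of_surjective_of_dist_eq_mul {X Y : Type*} [PseudoMetricSpace X]
    [PseudoMetricSpace Y] (hX : IsAdditiveMetric X) {f : X → Y} (hf : Function.Surjective f)
    {r : ℝ} (hr : 0 ≤ r) (hdist : ∀ u v, dist (f u) (f v) = r * dist u v) :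
    IsAdditiveMetric Y := by
  intro x y z t
  obtain ⟨a, rfl⟩ := hf x
  obtain ⟨b, rfl⟩ := hf y
  obtain ⟨c, rfl⟩ := hf z
  obtain ⟨d, rfl⟩ := hf t
  simp only [hdist, ← mul_add, ← mul_max_of_nonneg _ _ hr]
  exact mul_le_mul_of_nonneg_left (hX a b c d) hr

namespace IsQuasisymmetric

variable {X Y : Type*} [MetricSpace X] [PseudoMetricSpace Y] {f : X → Y}

theorem nndist_mul_le (hf : IsQuasisymmetric id f) {u w : X} (huw : u ≠ w) (v : X) :
    nndist (f u) (f v) * nndist u w ≤ nndist (f u) (f w) * nndist u v := by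
  rcases eq_or_ne u v with rfl | huv
  · simp
  have huw' : nndist u w ≠ 0 := mt nndist_eq_zero.1 huw
  have huv' : nndist u v ≠ 0 := mt nndist_eq_zero.1 huv
  have h := hf v w u (nndist u v / nndist u w) (by positivity) (div_mul_cancel₀ _ huw').ge
  calc nndist (f u) (f v) * nndist u w
      ≤ nndist u v / nndist u w * nndist (f u) (f w) * nndist u w := by gcongr; exact h
    _ = nndist (f u) (f w) * nndist u v := by field_simp

theorem nndist_mul_eq (hf : IsQuasisymmetric id f) (u v w : X) :
    nndist (f u) (f v) * nndist u w = nndist (f u) (f w) * nndist u v := by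
  rcases eq_or_ne u w with rfl | huw
  · simp
  rcases eq_or_ne u v with rfl | huv
  · simp
  exact le_antisymm (hf.nndist_mul_le huw v) (hf.nndist_mul_le huv w)

theorem nndist_mul_nndist_comm (hf : IsQuasisymmetric id f) (u v p q : X) :
    nndist (f u) (f v) * nndist p q = nndist (f p) (f q) * nndist u v := by
  rcases eq_or_ne u p with rfl | hup
  · rw [hf.nndist_mul_eq u v q, mul_comm]
  have hcentre_u := hf.nndist_mul_eq u v p
  have hcentre_p := hf.nndist_mul_eq p u q
  rw [nndist_comm (f p), nndist_comm p u] at hcentre_p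
  apply mul_right_cancel₀ (mt nndist_eq_zero.1 hup)
  calc nndist (f u) (f v) * nndist p q * nndist u p
      = nndist (f u) (f p) * nndist p q * nndist u v := by rw [mul_right_comm, hcentre_u]; ring
    _ = nndist (f p) (f q) * nndist u v * nndist u p := by rw [hcentre_p]; ring

theorem exists_nndist_eq_mul (hf : IsQuasisymmetric id f) :
    ∃ c : ℝ≥0, ∀ u v, nndist (f u) (f v) = c * nndist u v := by
  by_cases hX : ∃ p q : X, p ≠ q
  · obtain ⟨p, q, hpq⟩ := hX
    refine ⟨nndist (f p) (f q) / nndist p q, fun u v => ?_⟩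
    rw [div_mul_eq_mul_div, ← hf.nndist_mul_nndist_comm u v p q,
      mul_div_cancel_right₀ _ (mt nndist_eq_zero.1 hpq)]
  · push Not at hX
    exact ⟨0, fun u v => by simp [hX u v]⟩

end IsQuasisymmetric

theorem id_quasisymmetric_preserves_additive_metric
    {X Y : Type*} [MetricSpace X] [MetricSpace Y]
    (hX : ∀ x y z t : X,
      dist x z + dist t y ≤ max (dist x y + dist t z) (dist x t + dist y z))
    (f : X → Y) (hf : Function.Bijective f)
    (hqs : ∀ (a b x : X) (t : ℝ≥0), 0 < t →
      nndist x a ≤ t * nndist x b → nndist (f x) (f a) ≤ t * nndist (f x) (f b)) :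
    ∀ x y z t : Y,
      dist x z + dist t y ≤ max (dist x y + dist t z) (dist x t + dist y z) := by
  have hqs : IsQuasisymmetric id f := hqs
  obtain ⟨c, hc⟩ := hqs.exists_nndist_eq_mul
  exact IsAdditiveMetric.of_surjective_of_dist_eq_mul hX hf.surjective c.coe_nonneg
    fun u v => by rw [dist_nndist, dist_nndist, hc, NNReal.coe_mul]
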